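/- arXiv:0807.2266 — 5 statements merged into one kernel-verified Lean document; each statement's English description precedes it below -/
import Mathlib

section
/- Every connected filtered cograded bialgebra H over a commutative ring k is a Hopf algebra. The antipode is given by S(x) = Σ_{k≥0} (u∘ε − id_H)^{*k}(x) (the sum being finite on each x), it satisfies S * id_H = id_H * S = u∘ε, and on ker ε it satisfies the recursions S(x) = −x − Σ_{(x)} S(x')x'' and S(x) = −x − Σ_{(x)} x'S(x''), where Δ̃(x) = Σ_{(x)} x' ⊗ x'' denotes the reduced coproduct Δ(x) − x⊗1 − 1⊗x. -/
open TensorProduct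

/-- The convolution product `f * g = m_H ∘ (f ⊗ g) ∘ Δ` on `Hom_k(H, H)`. -/
noncomputable def conv {k C A : Type*} [CommRing k]
    [AddCommGroup C] [Module k C] [Coalgebra k C] [Ring A] [Algebra k A]
    (f g : C →ₗ[k] A) : C →ₗ[k] A :=
  LinearMap.mul' k A ∘ₗ TensorProduct.map f g ∘ₗ Coalgebra.comul

/-- The convolution unit `e = u ∘ ε`. -/
noncomputable def convUnit (k C A : Type*) [CommRing k]
    [AddCommGroup C] [Module k C] [Coalgebra k C] [Ring A] [Algebra k A] :
    C →ₗ[k] A :=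
  Algebra.linearMap k A ∘ₗ Coalgebra.counit

/-- Convolution powers `f^{*0} = u∘ε`, `f^{*(n+1)} = f^{*n} * f`. -/
noncomputable def convPow {k C A : Type*} [CommRing k]
    [AddCommGroup C] [Module k C] [Coalgebra k C] [Ring A] [Algebra k A]
    (f : C →ₗ[k] A) : ℕ → (C →ₗ[k] A)
  | 0 => convUnit k C A
  | n + 1 => conv (convPow f n) f

/-- The reduced coproduct `Δ̃(x) = Δ(x) - x ⊗ 1 - 1 ⊗ x` of a bialgebra. -/
noncomputable def reducedComul (k H : Type*) [CommRing k] [Ring H] [Bialgebra k H] :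
    H →ₗ[k] H ⊗[k] H :=
  Coalgebra.comul - ((TensorProduct.mk k H H).flip 1 + TensorProduct.mk k H H 1)

/-!
In the convolution ring `WithConv (H →ₗ[k] H)` write `id = 1 - e` with `e = u∘ε - id`, which
vanishes on `H₀ = k·1`. Because `Δ(Hₙ) ⊆ ⊕_{p+q=n} Hₚ ⊗ H_q`, the value of a convolution product
on `Hₙ` only depends on its factors on `H_{≤n}`, and induction on `m` gives `e^{*m}(Hₙ) = 0` for
`m > n`. So the Neumann series `S = Σₘ e^{*m}` is pointwise finite, and on `Hₙ` the identities
`S * (1 - e) = (1 - e) * S = 1` reduce to the geometric sums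
`(Σ_{m ≤ n} e^{*m}) * (1 - e) = 1 - e^{*(n+1)}`. The recursions come from evaluating
`S * id = u∘ε` at `x ∈ ker ε`, where `Δx = Δ̃x + x ⊗ 1 + 1 ⊗ x` and `S 1 = 1`.
-/

open WithConv

section Convolution

variable {k C A : Type*} [CommRing k] [AddCommGroup C] [Module k C] [Coalgebra k C]
  [Ring A] [Algebra k A]

lemma conv_eq_ofConv_mul (f g : C →ₗ[k] A) : conv f g = (toConv f * toConv g).ofConv := rfl

lemma convPow_eq_ofConv_pow (f : C →ₗ[k] A) (n : ℕ) : convPow f n = (toConv f ^ n).ofConv := by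
  induction n with
  | zero => rfl
  | succ n ih => rw [convPow, conv_eq_ofConv_mul, ih, toConv_ofConv, pow_succ]

lemma hasFiniteSupport_pow_apply {e : WithConv (C →ₗ[k] A)} {x : C} {N : ℕ}
    (hN : ∀ m ≥ N, (e ^ m) x = 0) : Function.HasFiniteSupport fun m ↦ (e ^ m) x :=
  (Set.finite_Iio N).subset fun m hm ↦ not_le.mp fun h ↦ hm (hN m h)

noncomputable def neumannSeries (e : WithConv (C →ₗ[k] A))
    (he : ∀ x, ∃ N, ∀ m ≥ N, (e ^ m) x = 0) : WithConv (C →ₗ[k] A) :=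
  toConv
    { toFun x := ∑ᶠ m, (e ^ m) x
      map_add' x y := by
        obtain ⟨Nx, hx⟩ := he x
        obtain ⟨Ny, hy⟩ := he y
        simp only [map_add]
        exact finsum_add_distrib (hasFiniteSupport_pow_apply hx) (hasFiniteSupport_pow_apply hy)
      map_smul' c x := by
        obtain ⟨N, hN⟩ := he x
        simp only [map_smul, RingHom.id_apply]
        exact (smul_finsum' c (hasFiniteSupport_pow_apply hN)).symm }

lemma neumannSeries_apply {e : WithConv (C →ₗ[k] A)} (he : ∀ x, ∃ N, ∀ m ≥ N, (e ^ m) x = 0)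
    {x : C} {N : ℕ} (hN : ∀ m ≥ N, (e ^ m) x = 0) :
    neumannSeries e he x = ∑ m ∈ Finset.range N, (e ^ m) x :=
  finsum_eq_finsetSum_of_support_subset _ fun m hm ↦
    Finset.mem_range.mpr (not_le.mp fun h ↦ hm (hN m h))

end Convolution

lemma LinearMap.ext_of_iSup_eq_top {R M N ι : Type*} [Semiring R] [AddCommMonoid M] [Module R M]
    [AddCommMonoid N] [Module R N] {p : ι → Submodule R M} (htop : ⨆ i, p i = ⊤)
    {f g : M →ₗ[R] N} (h : ∀ i, ∀ x ∈ p i, f x = g x) : f = g :=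
  LinearMap.ext_on (s := ⋃ i, (p i : Set M)) (by rw [← Submodule.iSup_eq_span, htop])
    fun x hx ↦ by
      obtain ⟨i, hi⟩ := Set.mem_iUnion.mp hx
      exact h i x hi

section Cograded

variable {k C : Type*} [CommRing k] [AddCommGroup C] [Module k C] [Coalgebra k C]

def IsCograded (ℋ : ℕ → Submodule k C) : Prop :=
  ∀ n : ℕ, ∀ x ∈ ℋ n,
    Coalgebra.comul (R := k) x ∈ ⨆ (p : ℕ) (q : ℕ) (_ : p + q = n),
      LinearMap.range (TensorProduct.map (ℋ p).subtype (ℋ q).subtype)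

namespace IsCograded

variable {ℋ : ℕ → Submodule k C}

lemma map_comul_eq_zero (hℋ : IsCograded ℋ) {M : Type*} [AddCommMonoid M] [Module k M]
    (φ : C ⊗[k] C →ₗ[k] M) {n : ℕ} {x : C} (hx : x ∈ ℋ n)
    (hφ : ∀ p q, p + q = n → ∀ a ∈ ℋ p, ∀ b ∈ ℋ q, φ (a ⊗ₜ b) = 0) :
    φ (Coalgebra.comul x) = 0 := by
  have hle : (⨆ (p : ℕ) (q : ℕ) (_ : p + q = n),
      LinearMap.range (TensorProduct.map (ℋ p).subtype (ℋ q).subtype)) ≤ LinearMap.ker φ :=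
    iSup₂_le fun p q ↦ iSup_le fun hpq ↦ LinearMap.range_le_ker_iff.mpr <|
      TensorProduct.ext' fun a b ↦ hφ p q hpq a a.2 b b.2
  exact hle (hℋ n x hx)

variable {A : Type*} [Ring A] [Algebra k A]

lemma mul_apply_congr (hℋ : IsCograded ℋ) {f f' g g' : WithConv (C →ₗ[k] A)} {n : ℕ} {x : C}
    (hx : x ∈ ℋ n) (hf : ∀ p ≤ n, ∀ a ∈ ℋ p, f a = f' a) (hg : ∀ q ≤ n, ∀ b ∈ ℋ q, g b = g' b) :
    (f * g) x = (f' * g') x := by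
  have h := hℋ.map_comul_eq_zero
    (LinearMap.mul' k A ∘ₗ (map f.ofConv g.ofConv - map f'.ofConv g'.ofConv)) hx
    fun p q hpq a ha b hb ↦ by simp [hf p (by omega) a ha, hg q (by omega) b hb]
  simpa [sub_eq_zero] using h

lemma pow_apply_eq_zero (hℋ : IsCograded ℋ) {f : WithConv (C →ₗ[k] A)}
    (hf : ∀ a ∈ ℋ 0, f a = 0) {m n : ℕ} (hnm : n < m) {x : C} (hx : x ∈ ℋ n) :
    (f ^ m) x = 0 := by
  induction m generalizing n x with
  | zero => omega
  | succ m ih =>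
    rw [pow_succ, LinearMap.convMul_apply]
    refine hℋ.map_comul_eq_zero (LinearMap.mul' k A ∘ₗ map (f ^ m).ofConv f.ofConv)
      hx fun p q hpq a ha b hb ↦ ?_
    rcases Nat.eq_zero_or_pos q with rfl | hq
    · simp [hf b hb]
    · simp [ih (by omega) ha]

lemma exists_pow_apply_eq_zero (hℋ : IsCograded ℋ) (htop : ⨆ n, ℋ n = ⊤)
    {f : WithConv (C →ₗ[k] A)} (hf : ∀ a ∈ ℋ 0, f a = 0) (x : C) :
    ∃ N, ∀ m ≥ N, (f ^ m) x = 0 := by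
  refine Submodule.iSup_induction ℋ (motive := fun x ↦ ∃ N, ∀ m ≥ N, (f ^ m) x = 0)
    (htop ▸ Submodule.mem_top (x := x)) (fun n y hy ↦ ?_) ?_ ?_
  · exact ⟨n + 1, fun m hm ↦ hℋ.pow_apply_eq_zero hf (by omega) hy⟩
  · exact ⟨0, fun m _ ↦ map_zero _⟩
  · rintro y z ⟨Ny, hy⟩ ⟨Nz, hz⟩
    exact ⟨max Ny Nz, fun m hm ↦ by
      rw [map_add, hy m (le_of_max_le_left hm), hz m (le_of_max_le_right hm), add_zero]⟩

lemma neumannSeries_apply_of_mem (hℋ : IsCograded ℋ) {e : WithConv (C →ₗ[k] A)}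
    (he : ∀ x, ∃ N, ∀ m ≥ N, (e ^ m) x = 0) (he0 : ∀ a ∈ ℋ 0, e a = 0) {p N : ℕ} (hpN : p < N)
    {a : C} (ha : a ∈ ℋ p) :
    neumannSeries e he a = (∑ m ∈ Finset.range N, e ^ m) a := by
  rw [neumannSeries_apply he (N := N) fun m hm ↦ hℋ.pow_apply_eq_zero he0 (by omega) ha]
  simp

variable (htop : ⨆ n, ℋ n = ⊤) {e : WithConv (C →ₗ[k] A)} (he0 : ∀ a ∈ ℋ 0, e a = 0)

lemma neumannSeries_mul_one_sub (hℋ : IsCograded ℋ) :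
    neumannSeries e (hℋ.exists_pow_apply_eq_zero htop he0) * (1 - e) = 1 := by
  refine WithConv.ext <| LinearMap.ext_of_iSup_eq_top htop fun n x hx ↦ ?_
  calc (neumannSeries e _ * (1 - e)) x
      = ((∑ m ∈ Finset.range (n + 1), e ^ m) * (1 - e)) x :=
        hℋ.mul_apply_congr hx (fun p hp a ha ↦ hℋ.neumannSeries_apply_of_mem _ he0 (by omega) ha)
          fun _ _ _ _ ↦ rfl
    _ = (1 - e ^ (n + 1)) x := by rw [geom_sum_mul_neg]
    _ = (1 : WithConv (C →ₗ[k] A)) x := by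
        simp [hℋ.pow_apply_eq_zero he0 (Nat.lt_succ_self n) hx]

lemma one_sub_mul_neumannSeries (hℋ : IsCograded ℋ) :
    (1 - e) * neumannSeries e (hℋ.exists_pow_apply_eq_zero htop he0) = 1 := by
  refine WithConv.ext <| LinearMap.ext_of_iSup_eq_top htop fun n x hx ↦ ?_
  calc ((1 - e) * neumannSeries e _) x
      = ((1 - e) * ∑ m ∈ Finset.range (n + 1), e ^ m) x :=
        hℋ.mul_apply_congr hx (fun _ _ _ _ ↦ rfl)
          fun q hq b hb ↦ hℋ.neumannSeries_apply_of_mem _ he0 (by omega) hb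
    _ = (1 - e ^ (n + 1)) x := by rw [mul_neg_geom_sum]
    _ = (1 : WithConv (C →ₗ[k] A)) x := by
        simp [hℋ.pow_apply_eq_zero he0 (Nat.lt_succ_self n) hx]

end IsCograded

end Cograded

section ReducedComul

variable {k H A : Type*} [CommRing k] [Ring H] [Bialgebra k H] [Ring A] [Algebra k A]

lemma comul_eq_reducedComul_add (x : H) :
    Coalgebra.comul (R := k) x = reducedComul k H x + (x ⊗ₜ 1 + 1 ⊗ₜ x) := by
  simp [reducedComul]

lemma convMul_apply_eq_reducedComul (f g : WithConv (H →ₗ[k] A)) (x : H) :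
    (f * g) x = LinearMap.mul' k A (map f.ofConv g.ofConv (reducedComul k H x))
      + (f x * g 1 + f 1 * g x) := by
  rw [LinearMap.convMul_apply, comul_eq_reducedComul_add]
  simp

variable {S : WithConv (H →ₗ[k] H)} {x : H}

lemma eq_neg_sub_of_mul_id_eq_one (hS : S * toConv LinearMap.id = 1) (hS1 : S 1 = 1)
    (hx : Coalgebra.counit (R := k) x = 0) :
    S x = -x - LinearMap.mul' k H (map S.ofConv LinearMap.id (reducedComul k H x)) := by
  have h := LinearMap.congr_fun (congrArg ofConv hS) x
  rw [convMul_apply_eq_reducedComul] at h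
  simp only [hS1, hx, LinearMap.convOne_apply, map_zero, LinearMap.id_apply, mul_one,
    one_mul] at h
  rw [← sub_eq_zero, ← h]
  abel

lemma eq_neg_sub_of_id_mul_eq_one (hS : toConv LinearMap.id * S = 1) (hS1 : S 1 = 1)
    (hx : Coalgebra.counit (R := k) x = 0) :
    S x = -x - LinearMap.mul' k H (map LinearMap.id S.ofConv (reducedComul k H x)) := by
  have h := LinearMap.congr_fun (congrArg ofConv hS) x
  rw [convMul_apply_eq_reducedComul] at h
  simp only [hS1, hx, LinearMap.convOne_apply, map_zero, LinearMap.id_apply, mul_one,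
    one_mul] at h
  rw [← sub_eq_zero, ← h]
  abel

end ReducedComul

theorem connected_filtered_cograded_is_hopf_general {k H : Type*} [CommRing k] [Ring H]
    [Bialgebra k H]
    (ℋ : ℕ → Submodule k H)
    (hdirect : DirectSum.IsInternal ℋ)
    (hcomul : ∀ n : ℕ, ∀ x ∈ ℋ n,
      Coalgebra.comul (R := k) x ∈ ⨆ (p : ℕ) (q : ℕ) (_ : p + q = n),
        LinearMap.range (TensorProduct.map (ℋ p).subtype (ℋ q).subtype))
    (hconn : ℋ 0 = Submodule.span k {(1 : H)}) :
    ∃ S : H →ₗ[k] H,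
      conv S LinearMap.id = convUnit k H H ∧
      conv LinearMap.id S = convUnit k H H ∧
      (∀ x : H, ∃ N : ℕ,
        (∀ n ≥ N, convPow (convUnit k H H - LinearMap.id) n x = 0) ∧
        S x = ∑ m ∈ Finset.range N, convPow (convUnit k H H - LinearMap.id) m x) ∧
      S 1 = 1 ∧
      (∀ x : H, Coalgebra.counit (R := k) x = 0 →
        S x = -x - LinearMap.mul' k H (TensorProduct.map S LinearMap.id (reducedComul k H x)) ∧
        S x = -x - LinearMap.mul' k H (TensorProduct.map LinearMap.id S (reducedComul k H x))) := by
  have hℋ : IsCograded ℋ := hcomul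
  set e : WithConv (H →ₗ[k] H) := toConv (convUnit k H H - LinearMap.id)
  have htop : ⨆ n, ℋ n = ⊤ := hdirect.submodule_iSup_eq_top
  have h1 : (1 : H) ∈ ℋ 0 := hconn ▸ Submodule.mem_span_singleton_self 1
  have he0 : ∀ a ∈ ℋ 0, e a = 0 := by
    rw [hconn]
    intro a ha
    obtain ⟨c, rfl⟩ := Submodule.mem_span_singleton.mp ha
    simp [e, convUnit, Algebra.algebraMap_eq_smul_one]
  have hid : toConv LinearMap.id = 1 - e := (sub_sub_cancel _ _).symm
  set S := neumannSeries e (hℋ.exists_pow_apply_eq_zero htop he0)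
  have hleft : S * toConv LinearMap.id = 1 := hid ▸ hℋ.neumannSeries_mul_one_sub htop he0
  have hright : toConv LinearMap.id * S = 1 := hid ▸ hℋ.one_sub_mul_neumannSeries htop he0
  have hS1 : S 1 = 1 := by
    rw [hℋ.neumannSeries_apply_of_mem _ he0 zero_lt_one h1]
    simp
  refine ⟨S.ofConv, congrArg ofConv hleft, congrArg ofConv hright, fun x ↦ ?_, hS1,
    fun x hx ↦ ⟨eq_neg_sub_of_mul_id_eq_one hleft hS1 hx,
      eq_neg_sub_of_id_mul_eq_one hright hS1 hx⟩⟩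
  obtain ⟨N, hN⟩ := hℋ.exists_pow_apply_eq_zero htop he0 x
  simp only [convPow_eq_ofConv_pow]
  exact ⟨N, hN, neumannSeries_apply _ hN⟩

/-- every connected filtered cograded bialgebra `H` over a commutative ring
`k` is a Hopf algebra: there is an antipode `S` with `S * id = id * S = u∘ε`, given on
each element by the (pointwise finite) sum `S(x) = Σ_{m≥0} (u∘ε - id)^{*m}(x)`, satisfying
`S(1) = 1` and, on `ker ε`, the recursions `S(x) = -x - Σ S(x')x''` and
`S(x) = -x - Σ x'S(x'')` where `Δ̃(x) = Σ x' ⊗ x''`. -/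
theorem connected_filtered_cograded_is_hopf {k H : Type*} [CommRing k] [Ring H]
    [Bialgebra k H]
    (ℋ : ℕ → Submodule k H)
    (hdirect : DirectSum.IsInternal ℋ)
    (hmul : ∀ p q : ℕ, ∀ x ∈ ℋ p, ∀ y ∈ ℋ q, x * y ∈ ⨆ i ≤ p + q, ℋ i)
    (hcomul : ∀ n : ℕ, ∀ x ∈ ℋ n,
      Coalgebra.comul (R := k) x ∈ ⨆ (p : ℕ) (q : ℕ) (_ : p + q = n),
        LinearMap.range (TensorProduct.map (ℋ p).subtype (ℋ q).subtype))
    (hconn : ℋ 0 = Submodule.span k {(1 : H)}) :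
    ∃ S : H →ₗ[k] H,
      conv S LinearMap.id = convUnit k H H ∧
      conv LinearMap.id S = convUnit k H H ∧
      (∀ x : H, ∃ N : ℕ,
        (∀ n ≥ N, convPow (convUnit k H H - LinearMap.id) n x = 0) ∧
        S x = ∑ m ∈ Finset.range N, convPow (convUnit k H H - LinearMap.id) m x) ∧
      S 1 = 1 ∧
      (∀ x : H, Coalgebra.counit (R := k) x = 0 →
        S x = -x - LinearMap.mul' k H (TensorProduct.map S LinearMap.id (reducedComul k H x)) ∧
        S x = -x - LinearMap.mul' k H (TensorProduct.map LinearMap.id S (reducedComul k H x))) :=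
  connected_filtered_cograded_is_hopf_general ℋ hdirect hcomul hconn
end

section
/- Let H be a connected graded bialgebra over a commutative ring k (graded by H = ⊕_{n≥0} H_n with H_0 = k·1_H) and let A be a unital k-algebra. If f ∈ Hom_k(H,A) satisfies f(1_H) = 0, then for every n ≥ 0 and every x ∈ ⊕_{k≤n} H_k, the (n+1)-fold convolution power satisfies f^{*(n+1)}(x) = 0. -/
/-!
Since `f` kills `H₀ = k·1`, it suffices to show by induction on `n` that `f^{*n}` kills `Hᵢ` for
`i < n`: for `x ∈ Hᵢ` write `Δx ∈ ∑_{p+q=i} H_p ⊗ H_q`; in `f^{*(n+1)}(x) = ∑ f^{*n}(x') f(x'')`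
a term with `q = 0` is killed by `f`, and one with `q > 0` has `p < i ≤ n`, so it is killed by `f^{*n}`.
-/

open TensorProduct

theorem range_map_subtype_le_ker_mul'_comp_map {k M N A : Type*} [CommRing k]
    [AddCommGroup M] [Module k M] [AddCommGroup N] [Module k N] [Ring A] [Algebra k A]
    (g : M →ₗ[k] A) (f : N →ₗ[k] A) (P : Submodule k M) (Q : Submodule k N)
    (h : P ≤ LinearMap.ker g ∨ Q ≤ LinearMap.ker f) :
    LinearMap.range (TensorProduct.map P.subtype Q.subtype) ≤
      LinearMap.ker (LinearMap.mul' k A ∘ₗ TensorProduct.map g f) := by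
  rw [LinearMap.range_le_ker_iff, LinearMap.comp_assoc, ← TensorProduct.map_comp]
  rcases h with hP | hQ
  · rw [LinearMap.le_ker_iff_comp_subtype_eq_zero.mp hP, TensorProduct.map_zero_left,
      LinearMap.comp_zero]
  · rw [LinearMap.le_ker_iff_comp_subtype_eq_zero.mp hQ, TensorProduct.map_zero_right,
      LinearMap.comp_zero]

section

variable {k C A : Type*} [CommRing k] [AddCommGroup C] [Module k C] [Coalgebra k C]
  [Ring A] [Algebra k A] {ℋ : ℕ → Submodule k C}

theorem le_ker_conv_of_comul_mem
    (hcomul : ∀ n : ℕ, ∀ x ∈ ℋ n,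
      Coalgebra.comul (R := k) x ∈ ⨆ (p : ℕ) (q : ℕ) (_ : p + q = n),
        LinearMap.range (TensorProduct.map (ℋ p).subtype (ℋ q).subtype))
    {g f : C →ₗ[k] A} (hf : ℋ 0 ≤ LinearMap.ker f) {i : ℕ}
    (hg : ∀ p < i, ℋ p ≤ LinearMap.ker g) :
    ℋ i ≤ LinearMap.ker (conv g f) := by
  have hle : (⨆ (p : ℕ) (q : ℕ) (_ : p + q = i),
      LinearMap.range (TensorProduct.map (ℋ p).subtype (ℋ q).subtype)) ≤
      LinearMap.ker (LinearMap.mul' k A ∘ₗ TensorProduct.map g f) := by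
    refine iSup₂_le fun p q => iSup_le fun hpq =>
      range_map_subtype_le_ker_mul'_comp_map g f _ _ ?_
    rcases Nat.eq_zero_or_pos q with rfl | hq
    · exact .inr hf
    · exact .inl (hg p (by omega))
  exact fun x hx => hle (hcomul i x hx)

theorem le_ker_convPow_of_comul_mem
    (hcomul : ∀ n : ℕ, ∀ x ∈ ℋ n,
      Coalgebra.comul (R := k) x ∈ ⨆ (p : ℕ) (q : ℕ) (_ : p + q = n),
        LinearMap.range (TensorProduct.map (ℋ p).subtype (ℋ q).subtype))
    {f : C →ₗ[k] A} (hf : ℋ 0 ≤ LinearMap.ker f) :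
    ∀ {n i : ℕ}, i < n → ℋ i ≤ LinearMap.ker (convPow f n)
  | n + 1, _, hi => le_ker_conv_of_comul_mem hcomul hf fun _ hp =>
      le_ker_convPow_of_comul_mem hcomul hf (by omega)

end

theorem conv_power_nilpotent_general {k H A : Type*} [CommRing k] [Ring H] [Bialgebra k H]
    [Ring A] [Algebra k A]
    (ℋ : ℕ → Submodule k H)
    (hcomul : ∀ n : ℕ, ∀ x ∈ ℋ n,
      Coalgebra.comul (R := k) x ∈ ⨆ (p : ℕ) (q : ℕ) (_ : p + q = n),
        LinearMap.range (TensorProduct.map (ℋ p).subtype (ℋ q).subtype))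
    (hconn : ℋ 0 = Submodule.span k {(1 : H)})
    (f : H →ₗ[k] A) (hf : f 1 = 0) :
    ∀ n : ℕ, ∀ x ∈ (⨆ i ≤ n, ℋ i : Submodule k H), convPow f (n + 1) x = 0 := by
  have hf₀ : ℋ 0 ≤ LinearMap.ker f := by
    rwa [hconn, Submodule.span_singleton_le_iff_mem]
  intro n x hx
  have hle : (⨆ i ≤ n, ℋ i : Submodule k H) ≤ LinearMap.ker (convPow f (n + 1)) :=
    iSup₂_le fun i hi => le_ker_convPow_of_comul_mem hcomul hf₀ (Nat.lt_succ_of_le hi)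
  exact hle hx

/-- let `H = ⊕ₙ Hₙ` be a connected graded bialgebra over a commutative ring
`k` and `A` a unital `k`-algebra. If `f ∈ Hom_k(H,A)` satisfies `f(1) = 0`, then for every
`n ≥ 0` and every `x ∈ ⊕_{i ≤ n} Hᵢ` we have `f^{*(n+1)}(x) = 0`. -/
theorem conv_power_nilpotent {k H A : Type*} [CommRing k] [Ring H] [Bialgebra k H]
    [Ring A] [Algebra k A]
    (ℋ : ℕ → Submodule k H)
    (hdirect : DirectSum.IsInternal ℋ)
    (hmul : ∀ p q : ℕ, ∀ x ∈ ℋ p, ∀ y ∈ ℋ q, x * y ∈ ℋ (p + q))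
    (hcomul : ∀ n : ℕ, ∀ x ∈ ℋ n,
      Coalgebra.comul (R := k) x ∈ ⨆ (p : ℕ) (q : ℕ) (_ : p + q = n),
        LinearMap.range (TensorProduct.map (ℋ p).subtype (ℋ q).subtype))
    (hconn : ℋ 0 = Submodule.span k {(1 : H)})
    (f : H →ₗ[k] A) (hf : f 1 = 0) :
    ∀ n : ℕ, ∀ x ∈ (⨆ i ≤ n, ℋ i : Submodule k H), convPow f (n + 1) x = 0 :=
  conv_power_nilpotent_general ℋ hcomul hconn f hf
end

section
/- Let H be a connected filtered cograded Hopf algebra over a commutative ring k and let A be a commutative unital k-algebra. Then the set Char(H,A) of characters (algebra homomorphisms H → A) is a group under the convolution product, with identity e = u_A∘ε_H, and the inverse of φ ∈ Char(H,A) is φ∘S, where S is the antipode of H. -/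
open TensorProduct

open WithConv

lemma algHom_comp_ofConv_one {R C A B : Type*} [CommSemiring R] [AddCommMonoid C] [Module R C]
    [Coalgebra R C] [Semiring A] [Algebra R A] [Semiring B] [Algebra R B] (f : A →ₐ[R] B) :
    f.toLinearMap ∘ₗ (1 : WithConv (C →ₗ[R] A)).ofConv = (1 : WithConv (C →ₗ[R] B)).ofConv := by
  ext; simp

namespace HopfAlgebra
variable {R H A : Type*} [CommSemiring R] [Semiring H] [HopfAlgebra R H]
  [CommSemiring A] [Algebra R A]

/-- A character because `S` is an antihomomorphism and `A` is commutative. -/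
noncomputable def compAntipode (f : H →ₐ[R] A) : H →ₐ[R] A :=
  .ofLinearMap (f.toLinearMap ∘ₗ antipode R) (by simp)
    (fun x y => by simp [antipode_mul_antidistrib, mul_comm])

lemma compAntipode_convMul_self (f : H →ₐ[R] A) :
    toConv (compAntipode f).toLinearMap * toConv f.toLinearMap = 1 := by
  have := LinearMap.algHom_comp_convMul_distrib f (toConv (antipode R)) (toConv LinearMap.id)
  rw [LinearMap.antipode_mul_id, algHom_comp_ofConv_one] at this
  exact congrArg toConv this.symm

lemma self_convMul_compAntipode (f : H →ₐ[R] A) :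
    toConv f.toLinearMap * toConv (compAntipode f).toLinearMap = 1 := by
  have := LinearMap.algHom_comp_convMul_distrib f (toConv LinearMap.id) (toConv (antipode R))
  rw [LinearMap.id_mul_antipode, algHom_comp_ofConv_one] at this
  exact congrArg toConv this.symm

end HopfAlgebra

theorem characters_form_group_general {k H A : Type*} [CommRing k] [Ring H] [Bialgebra k H]
    [CommRing A] [Algebra k A]
    (S : H →ₗ[k] H)
    (hS : conv S LinearMap.id = convUnit k H H ∧ conv LinearMap.id S = convUnit k H H) :
    (∃ echar : H →ₐ[k] A, echar.toLinearMap = convUnit k H A) ∧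
    (∀ f g : H →ₐ[k] A, ∃ h : H →ₐ[k] A,
      h.toLinearMap = conv f.toLinearMap g.toLinearMap) ∧
    (∀ f : H →ₐ[k] A,
      conv f.toLinearMap (convUnit k H A) = f.toLinearMap ∧
      conv (convUnit k H A) f.toLinearMap = f.toLinearMap) ∧
    (∀ f : H →ₐ[k] A, ∃ g : H →ₐ[k] A,
      g.toLinearMap = f.toLinearMap ∘ₗ S ∧
      conv f.toLinearMap g.toLinearMap = convUnit k H A ∧
      conv g.toLinearMap f.toLinearMap = convUnit k H A) := by
  -- `conv` and `convUnit` unfold to Mathlib's convolution product and unit on `WithConv`.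
  let : HopfAlgebra k H :=
    .ofConvInverse S (ofConv_injective hS.1) (ofConv_injective hS.2)
  refine ⟨⟨(1 : WithConv (H →ₐ[k] A)).ofConv, rfl⟩,
    fun f g => ⟨(toConv f * toConv g).ofConv, rfl⟩,
    fun f => ⟨congrArg ofConv (mul_one _), congrArg ofConv (one_mul _)⟩,
    fun f => ⟨HopfAlgebra.compAntipode f, rfl, ?_, ?_⟩⟩
  · exact congrArg ofConv (HopfAlgebra.self_convMul_compAntipode f)
  · exact congrArg ofConv (HopfAlgebra.compAntipode_convMul_self f)

/-- let `H` be a connected filtered cograded Hopf algebra over `k`, with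
antipode `S`, and `A` a commutative unital `k`-algebra. Then the characters
(algebra homomorphisms `H → A`) form a group under convolution: the unit `e = u_A∘ε` is a
character, the convolution of two characters is a character, `e` is a two-sided identity,
and the inverse of a character `φ` is the character `φ ∘ S`. -/
theorem characters_form_group {k H A : Type*} [CommRing k] [Ring H] [Bialgebra k H]
    [CommRing A] [Algebra k A]
    (ℋ : ℕ → Submodule k H)
    (hdirect : DirectSum.IsInternal ℋ)
    (hmul : ∀ p q : ℕ, ∀ x ∈ ℋ p, ∀ y ∈ ℋ q, x * y ∈ ⨆ i ≤ p + q, ℋ i)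
    (hcomul : ∀ n : ℕ, ∀ x ∈ ℋ n,
      Coalgebra.comul (R := k) x ∈ ⨆ (p : ℕ) (q : ℕ) (_ : p + q = n),
        LinearMap.range (TensorProduct.map (ℋ p).subtype (ℋ q).subtype))
    (hconn : ℋ 0 = Submodule.span k {(1 : H)})
    (S : H →ₗ[k] H)
    (hS : conv S LinearMap.id = convUnit k H H ∧ conv LinearMap.id S = convUnit k H H) :
    (∃ echar : H →ₐ[k] A, echar.toLinearMap = convUnit k H A) ∧
    (∀ f g : H →ₐ[k] A, ∃ h : H →ₐ[k] A,
      h.toLinearMap = conv f.toLinearMap g.toLinearMap) ∧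
    (∀ f : H →ₐ[k] A,
      conv f.toLinearMap (convUnit k H A) = f.toLinearMap ∧
      conv (convUnit k H A) f.toLinearMap = f.toLinearMap) ∧
    (∀ f : H →ₐ[k] A, ∃ g : H →ₐ[k] A,
      g.toLinearMap = f.toLinearMap ∘ₗ S ∧
      conv f.toLinearMap g.toLinearMap = convUnit k H A ∧
      conv g.toLinearMap f.toLinearMap = convUnit k H A) :=
  characters_form_group_general S hS
end

section
/- (Uniqueness of the Atkinson Factorization.) Let (R, P, R_n) be a complete Rota–Baxter algebra of weight λ over a commutative ring k, set P̃ = −λ·id − P, and let a ∈ R_1. Assume that λ has no non-zero divisors in R_1 (i.e. λx = 0 with x ∈ R_1 implies x = 0) and that P² = −λP on R_1. Then there exist unique elements c_ℓ ∈ 1 + P(R_1) and c_r ∈ 1 + P̃(R_1) such that 1 + λa = c_ℓ c_r. -/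
/-- The operator `P̃ = -λ·id - P` associated to a Rota–Baxter operator `P` of weight `λ`. -/
def tildeOp {k R : Type*} [CommRing k] [Ring R] [Algebra k R]
    (lam : k) (P : R →ₗ[k] R) : R → R :=
  fun x => -(lam • x) - P x

/-!
The Rota–Baxter identity gives `P x · P̃ y = P (x · P̃ y) + P̃ (P x · y)`, hence
`(1 + P u)(1 + P̃ v) = 1 + P (u + u · P̃ v) + P̃ (v + P u · v)`. As `P + P̃ = -λ`, this equals
`1 + λ a` as soon as `u + u · P̃ v = -a` and `v + P u · v = -a`; the map
`(u, v) ↦ (-a - u · P̃ v, -a - P u · v)` raises the filtration degree of differences on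
`F₁ × F₁`, so by completeness it has a fixed point.

For uniqueness, the same expansion writes the difference of two factorizations as `P α + P̃ β`
with `α, β ∈ F₁`. On `F₁` we have `P² = -λP` and `P P̃ = 0`, so `P (F₁) ∩ P̃ (F₁)` is killed by
`λ` and hence is zero. Both summands therefore vanish, which expresses `P u' - P u` and
`P̃ v' - P̃ v` through themselves times elements of `F₁`; so they lie in every `Fₙ` and vanish.
-/

structure IsCompleteFiltration {M : Type*} [AddCommGroup M] (G : ℕ → AddSubgroup M) : Prop where
  antitone : Antitone G
  eq_zero_of_forall_mem : ∀ x, (∀ n, x ∈ G n) → x = 0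
  exists_limit : ∀ f : ℕ → M, (∀ m, ∃ N, ∀ p ≥ N, ∀ q ≥ N, f p - f q ∈ G m) →
    ∃ x, ∀ m, ∃ N, ∀ n ≥ N, x - f n ∈ G m

namespace IsCompleteFiltration

variable {M N : Type*} [AddCommGroup M] [AddCommGroup N]
  {G : ℕ → AddSubgroup M} {H : ℕ → AddSubgroup N}

theorem prod (hG : IsCompleteFiltration G) (hH : IsCompleteFiltration H) :
    IsCompleteFiltration fun n => (G n).prod (H n) where
  antitone _ _ hmn := AddSubgroup.prod_mono (hG.antitone hmn) (hH.antitone hmn)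
  eq_zero_of_forall_mem w hw :=
    Prod.ext (hG.eq_zero_of_forall_mem _ fun n => (AddSubgroup.mem_prod.mp (hw n)).1)
      (hH.eq_zero_of_forall_mem _ fun n => (AddSubgroup.mem_prod.mp (hw n)).2)
  exists_limit f hf := by
    obtain ⟨x, hx⟩ := hG.exists_limit (fun n => (f n).1) fun m =>
      (hf m).imp fun _ h p hp q hq => (AddSubgroup.mem_prod.mp (h p hp q hq)).1
    obtain ⟨y, hy⟩ := hH.exists_limit (fun n => (f n).2) fun m =>
      (hf m).imp fun _ h p hp q hq => (AddSubgroup.mem_prod.mp (h p hp q hq)).2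
    refine ⟨(x, y), fun m => ?_⟩
    obtain ⟨N₁, hN₁⟩ := hx m
    obtain ⟨N₂, hN₂⟩ := hy m
    exact ⟨max N₁ N₂, fun n hn => AddSubgroup.mem_prod.mpr
      ⟨hN₁ n (le_of_max_le_left hn), hN₂ n (le_of_max_le_right hn)⟩⟩

theorem cauchy_of_sub_mem (hG : Antitone G) {f : ℕ → M} (hf : ∀ n, f (n + 1) - f n ∈ G n)
    (m : ℕ) : ∃ N, ∀ p ≥ N, ∀ q ≥ N, f p - f q ∈ G m := by
  have hfm : ∀ p ≥ m, f p - f m ∈ G m := by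
    intro p hp
    induction p, hp using Nat.le_induction with
    | base => simp
    | succ p hmp ih => simpa using add_mem (hG hmp (hf p)) ih
  exact ⟨m, fun p hp q hq => by simpa using sub_mem (hfm p hp) (hfm q hq)⟩

theorem exists_fixedPoint (hG : IsCompleteFiltration G) {T : M → M}
    (hT : ∀ x ∈ G 1, T x ∈ G 1)
    (hcontr : ∀ n, ∀ x ∈ G 1, ∀ y ∈ G 1, x - y ∈ G n → T x - T y ∈ G (n + 1)) :
    ∃ x ∈ G 1, T x = x := by
  set f : ℕ → M := fun n => T^[n] 0
  have hf_succ : ∀ n, f (n + 1) = T (f n) := fun n => Function.iterate_succ_apply' T n 0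
  have hf1 : ∀ n, f n ∈ G 1 := fun n => by
    induction n with
    | zero => exact zero_mem _
    | succ n ih => rw [hf_succ]; exact hT _ ih
  have hf_sub : ∀ n, f (n + 1) - f n ∈ G n := fun n => by
    induction n with
    | zero => simpa [f] using hG.antitone zero_le_one (hT 0 (zero_mem _))
    | succ n ih =>
      have h := hcontr n _ (hf1 (n + 1)) _ (hf1 n) ih
      rwa [← hf_succ, ← hf_succ] at h
  obtain ⟨x, hx⟩ := hG.exists_limit f (cauchy_of_sub_mem hG.antitone hf_sub)
  have hx1 : x ∈ G 1 := by
    obtain ⟨N, hN⟩ := hx 1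
    simpa using add_mem (hN N le_rfl) (hf1 N)
  refine ⟨x, hx1, sub_eq_zero.mp (hG.eq_zero_of_forall_mem _ fun m => ?_)⟩
  obtain ⟨N, hN⟩ := hx m
  have hTx : T x - T (f N) ∈ G m :=
    hG.antitone m.le_succ (hcontr m _ hx1 _ (hf1 N) (hN N le_rfl))
  have hx_succ : x - T (f N) ∈ G m := hf_succ N ▸ hN (N + 1) N.le_succ
  simpa using sub_mem hTx hx_succ

end IsCompleteFiltration

def IsRotaBaxter {k R : Type*} [CommRing k] [Ring R] [Algebra k R]
    (lam : k) (P : R →ₗ[k] R) : Prop :=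
  ∀ x y : R, P x * P y = P (x * P y) + P (P x * y) + lam • P (x * y)

section RotaBaxter

variable {k R : Type*} [CommRing k] [Ring R] [Algebra k R] {lam : k} {P : R →ₗ[k] R}

theorem tildeOp_add (x y : R) :
    tildeOp lam P (x + y) = tildeOp lam P x + tildeOp lam P y := by
  simp only [tildeOp, map_add, smul_add]; abel

theorem tildeOp_sub (x y : R) :
    tildeOp lam P (x - y) = tildeOp lam P x - tildeOp lam P y := by
  simp only [tildeOp, map_sub, smul_sub]; abel

theorem add_tildeOp_self (x : R) : P x + tildeOp lam P x = -(lam • x) := by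
  simp only [tildeOp]; abel

theorem tildeOp_mem {S : Submodule k R} (hPS : ∀ x ∈ S, P x ∈ S) {x : R} (hx : x ∈ S) :
    tildeOp lam P x ∈ S :=
  sub_mem (neg_mem (S.smul_mem lam hx)) (hPS x hx)

theorem IsRotaBaxter.mul_tildeOp (hP : IsRotaBaxter lam P) (x y : R) :
    P x * tildeOp lam P y = P (x * tildeOp lam P y) + tildeOp lam P (P x * y) := by
  simp only [tildeOp, mul_sub, mul_neg, mul_smul_comm, map_sub, map_neg, map_smul, hP x y]
  abel

theorem IsRotaBaxter.one_add_mul_one_add_tildeOp (hP : IsRotaBaxter lam P) (x y : R) :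
    (1 + P x) * (1 + tildeOp lam P y) =
      1 + P (x + x * tildeOp lam P y) + tildeOp lam P (y + P x * y) := by
  rw [map_add, tildeOp_add, add_mul, mul_add, mul_add, hP.mul_tildeOp]
  noncomm_ring

theorem eq_zero_of_add_tildeOp_eq_zero {S : Submodule k R} (hPS : ∀ x ∈ S, P x ∈ S)
    (hreg : ∀ x ∈ S, lam • x = 0 → x = 0) (hP2 : ∀ x ∈ S, P (P x) = -(lam • P x))
    {x y : R} (hx : x ∈ S) (hy : y ∈ S) (h : P x + tildeOp lam P y = 0) :
    P x = 0 ∧ tildeOp lam P y = 0 := by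
  have hPy : P (tildeOp lam P y) = 0 := by
    simp only [tildeOp, map_sub, map_neg, map_smul, hP2 y hy]; abel
  have hPx : lam • P x = 0 := by
    have := congrArg P h
    rwa [map_add, hP2 x hx, hPy, map_zero, add_zero, neg_eq_zero] at this
  have hPx0 := hreg _ (hPS x hx) hPx
  exact ⟨hPx0, by rwa [hPx0, zero_add] at h⟩

end RotaBaxter

section Filtered

variable {k R : Type*} [CommRing k] [Ring R] [Algebra k R] {lam : k} {P : R →ₗ[k] R}
  {F : ℕ → Submodule k R}

theorem mul_mem_of_le (hF : Antitone F) (hmul : ∀ m n, ∀ x ∈ F m, ∀ y ∈ F n, x * y ∈ F (m + n))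
    {m n l : ℕ} (hl : l ≤ m + n) {x y : R} (hx : x ∈ F m) (hy : y ∈ F n) : x * y ∈ F l :=
  hF hl (hmul m n x hx y hy)

theorem exists_atkinson_fixedPoint (hF : IsCompleteFiltration fun n => (F n).toAddSubgroup)
    (hmul : ∀ m n, ∀ x ∈ F m, ∀ y ∈ F n, x * y ∈ F (m + n))
    (hPF : ∀ n, ∀ x ∈ F n, P x ∈ F n) {a : R} (ha : a ∈ F 1) :
    ∃ u v, u ∈ F 1 ∧ v ∈ F 1 ∧ u + u * tildeOp lam P v = -a ∧ v + P u * v = -a := by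
  have hanti : Antitone F := fun _ _ h _ hx => hF.antitone h hx
  let G : ℕ → AddSubgroup (R × R) := fun n => (F n).toAddSubgroup.prod (F n).toAddSubgroup
  have hG : ∀ n w, w ∈ G n ↔ w.1 ∈ F n ∧ w.2 ∈ F n := fun _ _ => AddSubgroup.mem_prod
  let T : R × R → R × R := fun w => (-a - w.1 * tildeOp lam P w.2, -a - P w.1 * w.2)
  have hT : ∀ w ∈ G 1, T w ∈ G 1 := by
    rintro ⟨u, v⟩ huv
    obtain ⟨hu, hv⟩ := (hG 1 _).mp huv
    exact (hG 1 _).mpr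
      ⟨sub_mem (neg_mem ha) (mul_mem_of_le hanti hmul (by norm_num) hu (tildeOp_mem (hPF 1) hv)),
        sub_mem (neg_mem ha) (mul_mem_of_le hanti hmul (by norm_num) (hPF 1 u hu) hv)⟩
  have hcontr : ∀ n, ∀ w ∈ G 1, ∀ w' ∈ G 1, w - w' ∈ G n → T w - T w' ∈ G (n + 1) := by
    rintro n ⟨u, v⟩ huv ⟨u', v'⟩ huv' hd
    obtain ⟨hu, hv⟩ := (hG 1 _).mp huv
    obtain ⟨hu', hv'⟩ := (hG 1 _).mp huv'
    obtain ⟨hdu, hdv⟩ := (hG n _).mp hd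
    have e1 : (T (u, v) - T (u', v')).1 =
        -((u - u') * tildeOp lam P v + u' * tildeOp lam P (v - v')) := by
      simp only [T, Prod.fst_sub, tildeOp_sub]; noncomm_ring
    have e2 : (T (u, v) - T (u', v')).2 = -(P (u - u') * v + P u' * (v - v')) := by
      simp only [T, Prod.snd_sub, map_sub]; noncomm_ring
    refine (hG _ _).mpr ⟨?_, ?_⟩
    · rw [e1]
      exact neg_mem (add_mem (hmul _ _ _ hdu _ (tildeOp_mem (hPF 1) hv))
        (mul_mem_of_le hanti hmul (add_comm _ _).le hu' (tildeOp_mem (hPF n) hdv)))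
    · rw [e2]
      exact neg_mem (add_mem (hmul _ _ _ (hPF n _ hdu) _ hv)
        (mul_mem_of_le hanti hmul (add_comm _ _).le (hPF 1 _ hu') hdv))
  obtain ⟨⟨u, v⟩, huv, hfix⟩ := (hF.prod hF).exists_fixedPoint hT hcontr
  obtain ⟨hu, hv⟩ := (hG 1 _).mp huv
  have hu_fix : u + u * tildeOp lam P v = -a := by
    have h : -a - u * tildeOp lam P v = u := congrArg Prod.fst hfix
    nth_rewrite 1 [← h]; abel
  have hv_fix : v + P u * v = -a := by
    have h : -a - P u * v = v := congrArg Prod.snd hfix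
    nth_rewrite 1 [← h]; abel
  exact ⟨u, v, hu, hv, hu_fix, hv_fix⟩

theorem exists_atkinson_factorization (hP : IsRotaBaxter lam P)
    (hF : IsCompleteFiltration fun n => (F n).toAddSubgroup)
    (hmul : ∀ m n, ∀ x ∈ F m, ∀ y ∈ F n, x * y ∈ F (m + n))
    (hPF : ∀ n, ∀ x ∈ F n, P x ∈ F n) {a : R} (ha : a ∈ F 1) :
    ∃ u v, u ∈ F 1 ∧ v ∈ F 1 ∧ 1 + lam • a = (1 + P u) * (1 + tildeOp lam P v) := by
  obtain ⟨u, v, hu, hv, hu_fix, hv_fix⟩ := exists_atkinson_fixedPoint hF hmul hPF ha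
  refine ⟨u, v, hu, hv, ?_⟩
  rw [hP.one_add_mul_one_add_tildeOp, add_assoc, hu_fix, hv_fix, add_tildeOp_self, smul_neg,
    neg_neg]

theorem atkinson_factors_eq_of_mul_eq (hP : IsRotaBaxter lam P) (hanti : Antitone F)
    (hsep : ∀ x, (∀ n, x ∈ F n) → x = 0)
    (hmul : ∀ m n, ∀ x ∈ F m, ∀ y ∈ F n, x * y ∈ F (m + n))
    (hPF : ∀ n, ∀ x ∈ F n, P x ∈ F n) (hreg : ∀ x ∈ F 1, lam • x = 0 → x = 0)
    (hP2 : ∀ x ∈ F 1, P (P x) = -(lam • P x)) {u v u' v' : R}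
    (hu : u ∈ F 1) (hv : v ∈ F 1) (hu' : u' ∈ F 1) (hv' : v' ∈ F 1)
    (h : (1 + P u') * (1 + tildeOp lam P v') = (1 + P u) * (1 + tildeOp lam P v)) :
    P u' = P u ∧ tildeOp lam P v' = tildeOp lam P v := by
  set x := u' - u
  set y := v' - v
  have hx : x ∈ F 1 := sub_mem hu' hu
  have hy : y ∈ F 1 := sub_mem hv' hv
  have hsplit : P (x + x * tildeOp lam P v' + u * tildeOp lam P y) +
      tildeOp lam P (y + P x * v' + P u * y) = 0 := by
    calc _ = P x + tildeOp lam P y + (P (x * tildeOp lam P v') + tildeOp lam P (P x * v'))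
          + (P (u * tildeOp lam P y) + tildeOp lam P (P u * y)) := by
          simp only [map_add, tildeOp_add]; abel
      _ = P x + tildeOp lam P y + P x * tildeOp lam P v' + P u * tildeOp lam P y := by
          rw [hP.mul_tildeOp, hP.mul_tildeOp]
      _ = (1 + P u') * (1 + tildeOp lam P v') - (1 + P u) * (1 + tildeOp lam P v) := by
          simp only [x, y, map_sub, tildeOp_sub]; noncomm_ring
      _ = 0 := sub_eq_zero.mpr h
  have hmem1 {a b : R} (ha : a ∈ F 1) (hb : b ∈ F 1) : a * b ∈ F 1 :=
    mul_mem_of_le hanti hmul (by norm_num) ha hb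
  obtain ⟨hPx, hTy⟩ := eq_zero_of_add_tildeOp_eq_zero (hPF 1) hreg hP2
    (add_mem (add_mem hx (hmem1 hx (tildeOp_mem (hPF 1) hv')))
      (hmem1 hu (tildeOp_mem (hPF 1) hy)))
    (add_mem (add_mem hy (hmem1 (hPF 1 x hx) hv')) (hmem1 (hPF 1 u hu) hy)) hsplit
  have hD : P x =
      tildeOp lam P (P x * v') - P x * tildeOp lam P v' - P (u * tildeOp lam P y) := by
    rw [map_add, map_add, eq_sub_of_add_eq (hP.mul_tildeOp x v').symm] at hPx
    rw [← sub_eq_zero, ← hPx]; abel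
  have hE : tildeOp lam P y = P (u * tildeOp lam P y) - P u * tildeOp lam P y
      - tildeOp lam P (P x * v') := by
    rw [tildeOp_add, tildeOp_add, eq_sub_of_add_eq' (hP.mul_tildeOp u y).symm] at hTy
    rw [← sub_eq_zero, ← hTy]; abel
  have hDE : ∀ n, P x ∈ F n ∧ tildeOp lam P y ∈ F n := by
    intro n
    induction n with
    | zero => exact ⟨hanti zero_le_one (hPF 1 x hx), hanti zero_le_one (tildeOp_mem (hPF 1) hy)⟩
    | succ n ih =>
      have hDv : P x * v' ∈ F (n + 1) := hmul _ _ _ ih.1 _ hv'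
      have huE : u * tildeOp lam P y ∈ F (n + 1) :=
        mul_mem_of_le hanti hmul (add_comm _ _).le hu ih.2
      constructor
      · rw [hD]
        exact sub_mem (sub_mem (tildeOp_mem (hPF _) hDv)
          (hmul _ _ _ ih.1 _ (tildeOp_mem (hPF 1) hv'))) (hPF _ _ huE)
      · rw [hE]
        exact sub_mem (sub_mem (hPF _ _ huE)
          (mul_mem_of_le hanti hmul (add_comm _ _).le (hPF 1 u hu) ih.2))
          (tildeOp_mem (hPF _) hDv)
  constructor
  · rw [← sub_eq_zero, ← map_sub]
    exact hsep _ fun n => (hDE n).1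
  · rw [← sub_eq_zero, ← tildeOp_sub]
    exact hsep _ fun n => (hDE n).2

end Filtered

theorem atkinson_factorization_unique_general {k R : Type*} [CommRing k] [Ring R] [Algebra k R]
    (lam : k) (P : R →ₗ[k] R)
    (hP : ∀ x y : R, P x * P y = P (x * P y) + P (P x * y) + lam • P (x * y))
    (F : ℕ → Submodule k R)
    (hdec : ∀ n : ℕ, F (n + 1) ≤ F n)
    (hmul : ∀ m n : ℕ, ∀ x ∈ F m, ∀ y ∈ F n, x * y ∈ F (m + n))
    (hsep : (⨅ n, F n) = ⊥)
    (hcomplete : ∀ f : ℕ → R,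
      (∀ m : ℕ, ∃ N : ℕ, ∀ p ≥ N, ∀ q ≥ N, f p - f q ∈ F m) →
      ∃ x : R, ∀ m : ℕ, ∃ N : ℕ, ∀ n ≥ N, x - f n ∈ F m)
    (hPF : ∀ n : ℕ, ∀ x ∈ F n, P x ∈ F n)
    (hreg : ∀ x ∈ F 1, lam • x = 0 → x = 0)
    (hP2 : ∀ x ∈ F 1, P (P x) = -(lam • P x))
    (a : R) (ha : a ∈ F 1) :
    ∃ u v : R, u ∈ F 1 ∧ v ∈ F 1 ∧
      1 + lam • a = (1 + P u) * (1 + tildeOp lam P v) ∧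
      ∀ u' v' : R, u' ∈ F 1 → v' ∈ F 1 →
        1 + lam • a = (1 + P u') * (1 + tildeOp lam P v') →
        1 + P u' = 1 + P u ∧ 1 + tildeOp lam P v' = 1 + tildeOp lam P v := by
  have hanti : Antitone F := antitone_nat_of_succ_le hdec
  have hsep' : ∀ x, (∀ n, x ∈ F n) → x = 0 := fun x hx => by
    simpa [← Submodule.mem_bot k, ← hsep, Submodule.mem_iInf] using hx
  have hF : IsCompleteFiltration fun n => (F n).toAddSubgroup :=
    ⟨fun _ _ hmn => hanti hmn, hsep', hcomplete⟩
  obtain ⟨u, v, hu, hv, hfac⟩ := exists_atkinson_factorization hP hF hmul hPF ha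
  refine ⟨u, v, hu, hv, hfac, fun u' v' hu' hv' hfac' => ?_⟩
  obtain ⟨hPu, hTv⟩ := atkinson_factors_eq_of_mul_eq hP hanti hsep' hmul hPF hreg hP2
    hu hv hu' hv' (hfac'.symm.trans hfac)
  exact ⟨congrArg (1 + ·) hPu, congrArg (1 + ·) hTv⟩

/-- Uniqueness of the Atkinson Factorization: in a complete
(filtered) Rota–Baxter algebra `(R, P, Fₙ)` of weight `λ`, if `λ` has no nonzero
divisors in `F 1` and `P² = -λP` on `F 1`, then for `a ∈ F 1` there are unique
`c_ℓ ∈ 1 + P(F 1)` and `c_r ∈ 1 + P̃(F 1)` with `1 + λa = c_ℓ c_r`. -/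
theorem atkinson_factorization_unique {k R : Type*} [CommRing k] [Ring R] [Algebra k R]
    (lam : k) (P : R →ₗ[k] R)
    (hP : ∀ x y : R, P x * P y = P (x * P y) + P (P x * y) + lam • P (x * y))
    (F : ℕ → Submodule k R)
    (hF0 : F 0 = ⊤)
    (hdec : ∀ n : ℕ, F (n + 1) ≤ F n)
    (hmul : ∀ m n : ℕ, ∀ x ∈ F m, ∀ y ∈ F n, x * y ∈ F (m + n))
    (hsep : (⨅ n, F n) = ⊥)
    (hcomplete : ∀ f : ℕ → R,
      (∀ m : ℕ, ∃ N : ℕ, ∀ p ≥ N, ∀ q ≥ N, f p - f q ∈ F m) →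
      ∃ x : R, ∀ m : ℕ, ∃ N : ℕ, ∀ n ≥ N, x - f n ∈ F m)
    (hPF : ∀ n : ℕ, ∀ x ∈ F n, P x ∈ F n)
    (hreg : ∀ x ∈ F 1, lam • x = 0 → x = 0)
    (hP2 : ∀ x ∈ F 1, P (P x) = -(lam • P x))
    (a : R) (ha : a ∈ F 1) :
    ∃ u v : R, u ∈ F 1 ∧ v ∈ F 1 ∧
      1 + lam • a = (1 + P u) * (1 + tildeOp lam P v) ∧
      ∀ u' v' : R, u' ∈ F 1 → v' ∈ F 1 →
        1 + lam • a = (1 + P u') * (1 + tildeOp lam P v') →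
        1 + P u' = 1 + P u ∧ 1 + tildeOp lam P v' = 1 + tildeOp lam P v :=
  atkinson_factorization_unique_general lam P hP F hdec hmul hsep hcomplete hPF hreg hP2 a ha
end

section
/- (Kingman.) Let (R,P) be a Rota–Baxter algebra of weight −1 over a commutative ring k, and set P̃ = id − P. Then: (i) for all a, b ∈ R, P(a)P(b) = P(P(a)P(b) − P̃(a)P̃(b)); (ii) for all n ≥ 2 and a_1, …, a_n ∈ R, the ordered product satisfies ∏_{i=1}^{n} P(a_i) = P(∏_{i=1}^{n} P(a_i) − ∏_{i=1}^{n} (−P̃(a_i))); in particular, taking all a_i = u, P(u)^n = P(P(u)^n − (−P̃(u))^n) for all u ∈ R and n ≥ 2. -/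
/-!
Part (i) is a rearrangement of the weight `-1` Rota–Baxter identity, since
`P a * P b - (a - P a) * (b - P b) = a * P b + P a * b - a * b`. Part (ii) follows by induction on
the number of factors: if `X = P (X - Y)`, then (i) applied to `c` and `X - Y` gives
`P c * X = P (P c * X - (-(c - P c)) * Y)`. Part (iii) is the case of equal factors.
-/

section RotaBaxter

variable {R F : Type*} [Ring R] [FunLike F R R] [AddMonoidHomClass F R R] {P : F}

theorem rotaBaxter_mul_eq_map_sub_compl_mul
    (hP : ∀ x y : R, P x * P y = P (x * P y) + P (P x * y) - P (x * y)) (a b : R) :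
    P a * P b = P (P a * P b - (a - P a) * (b - P b)) := by
  have expand : P a * P b - (a - P a) * (b - P b) = a * P b + P a * b - a * b := by noncomm_ring
  rw [expand, map_sub, map_add, ← hP a b]

theorem rotaBaxter_mul_left_of_eq_map_sub
    (hP : ∀ x y : R, P x * P y = P (x * P y) + P (P x * y) - P (x * y)) (c : R) {X Y : R}
    (hX : X = P (X - Y)) :
    P c * X = P (P c * X - (-(c - P c)) * Y) := by
  calc P c * X = P c * P (X - Y) := by rw [← hX]
    _ = P (P c * P (X - Y) - (c - P c) * ((X - Y) - P (X - Y))) :=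
      rotaBaxter_mul_eq_map_sub_compl_mul hP _ _
    _ = P (P c * X - (-(c - P c)) * Y) := by rw [← hX]; congr 1; noncomm_ring

theorem rotaBaxter_prod_map_cons
    (hP : ∀ x y : R, P x * P y = P (x * P y) + P (P x * y) - P (x * y)) (a : R) (l : List R) :
    ((a :: l).map P).prod =
      P (((a :: l).map P).prod - ((a :: l).map fun x => -(x - P x)).prod) := by
  induction l generalizing a with
  | nil => simp
  | cons b l ih =>
    rw [List.map_cons, List.prod_cons, List.map_cons (l := b :: l), List.prod_cons]
    exact rotaBaxter_mul_left_of_eq_map_sub hP a (ih b)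

end RotaBaxter

/-- Kingman: in a Rota–Baxter algebra `(R,P)` of weight `-1`, with
`P̃ = id - P` (so `P̃ a = a - P a`):
(i) `P(a)P(b) = P(P(a)P(b) - P̃(a)P̃(b))` for all `a, b`;
(ii) for `n ≥ 2`, the ordered product satisfies
`∏ P(aᵢ) = P(∏ P(aᵢ) - ∏ (-P̃(aᵢ)))`; in particular `P(u)ⁿ = P(P(u)ⁿ - (-P̃(u))ⁿ)`. -/
theorem kingman_identities {k R : Type*} [CommRing k] [Ring R] [Algebra k R]
    (P : R →ₗ[k] R)
    (hP : ∀ x y : R, P x * P y = P (x * P y) + P (P x * y) - P (x * y)) :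
    (∀ a b : R, P a * P b = P (P a * P b - (a - P a) * (b - P b))) ∧
    (∀ n : ℕ, 2 ≤ n → ∀ a : Fin n → R,
      (List.ofFn fun i => P (a i)).prod =
        P ((List.ofFn fun i => P (a i)).prod - (List.ofFn fun i => -(a i - P (a i))).prod)) ∧
    (∀ u : R, ∀ n : ℕ, 2 ≤ n → P u ^ n = P (P u ^ n - (-(u - P u)) ^ n)) := by
  have prod_ofFn : ∀ n : ℕ, 2 ≤ n → ∀ a : Fin n → R,
      (List.ofFn fun i => P (a i)).prod =
        P ((List.ofFn fun i => P (a i)).prod - (List.ofFn fun i => -(a i - P (a i))).prod) := by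
    rintro (_ | m) hn a
    · omega
    · have h := rotaBaxter_prod_map_cons hP (a 0) (List.ofFn fun i => a i.succ)
      rw [← List.ofFn_succ, List.map_ofFn, List.map_ofFn] at h
      exact h
  refine ⟨rotaBaxter_mul_eq_map_sub_compl_mul hP, prod_ofFn, fun u n hn => ?_⟩
  simpa only [List.ofFn_const, List.prod_replicate] using prod_ofFn n hn fun _ => u
end
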